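/- arXiv:1208.2760 — 3 statements merged into one kernel-verified Lean document; each statement's English description precedes it below -/
import Mathlib

section
/- For a partitioned cellular automaton P = (ℤ, (Q₁,...,Qₘ), (n₁,...,nₘ), f), the local function f : Q₁×···×Qₘ → Q₁×···×Qₘ is injective if and only if the global function F : Conf(Q) → Conf(Q), defined by F(α)(x) = f(pr₁(α(x+n₁)),...,prₘ(α(x+nₘ))), is injective. -/
namespace PartitionedCA

variable {G ι : Type*} {Q : ι → Type*}

def globalMap [Add G] (n : ι → G) (f : (∀ i, Q i) → ∀ i, Q i) (α : G → ∀ i, Q i) :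
    G → ∀ i, Q i :=
  fun x => f fun i => α (x + n i) i

theorem globalMap_const [Add G] (n : ι → G) (f : (∀ i, Q i) → ∀ i, Q i) (q : ∀ i, Q i) :
    globalMap n f (fun _ => q) = fun _ => f q :=
  rfl

theorem globalMap_injective [AddGroup G] (n : ι → G) {f : (∀ i, Q i) → ∀ i, Q i}
    (hf : Function.Injective f) : Function.Injective (globalMap n f) := by
  intro α β h
  funext y i
  -- the `i`-th component of `α y` is read by the cell `y - n i`
  simpa using congrFun (hf (congrFun h (y - n i))) i

theorem injective_of_globalMap_injective [Add G] [Nonempty G] (n : ι → G)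
    {f : (∀ i, Q i) → ∀ i, Q i} (hF : Function.Injective (globalMap n f)) :
    Function.Injective f := by
  intro p q hpq
  have hconst : globalMap n f (fun _ => p) = globalMap n f (fun _ => q) := by
    rw [globalMap_const, globalMap_const, hpq]
  exact congrFun (hF hconst) (Classical.arbitrary G)

theorem globalMap_injective_iff [AddGroup G] (n : ι → G) (f : (∀ i, Q i) → ∀ i, Q i) :
    Function.Injective (globalMap n f) ↔ Function.Injective f :=
  ⟨injective_of_globalMap_injective n, globalMap_injective n⟩

end PartitionedCA

theorem stmt4_general {m : ℕ} (Q : Fin m → Type*)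
    (n : Fin m → ℤ) (f : (∀ i, Q i) → (∀ i, Q i)) :
    Function.Injective f ↔
      Function.Injective
        (fun (α : ℤ → ∀ i, Q i) => fun (x : ℤ) => f (fun i => α (x + n i) i)) :=
  (PartitionedCA.globalMap_injective_iff n f).symm

theorem stmt4 {m : ℕ} (Q : Fin m → Type*) [∀ i, Fintype (Q i)] [∀ i, Nonempty (Q i)]
    (n : Fin m → ℤ) (f : (∀ i, Q i) → (∀ i, Q i)) :
    Function.Injective f ↔
      Function.Injective
        (fun (α : ℤ → ∀ i, Q i) => fun (x : ℤ) => f (fun i => α (x + n i) i)) :=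
  stmt4_general Q n f
end

section
/- Given a 2-neighbor PCA P = (ℤ, (C,R), (0,−1), f) with injective local function f, the 4-neighbor CA A with state set Q̃ = {0,...,4|C||R|−1} and local function f̃ defined by: f̃(q₋₂,q₋₁,q₀,q₁) = φ̂(f(φ̂_C⁻¹(p_C(q₀)), φ̂_R⁻¹(p_R(q₋₁)))) if (q₋₁,q₀) ∈ B_R and (q₀,q₁) ∈ B_C; f̃(q₋₂,q₋₁,q₀,q₁) = φ̌(f(φ̂_C⁻¹(p_C(q₋₁)), φ̂_R⁻¹(p_R(q₋₂)))) if (q₋₂,q₋₁) ∈ B_R and (q₋₁,q₀) ∈ B_C; and f̃(q₋₂,q₋₁,q₀,q₁) = p_C(q₀) + p_R(q₋₁) otherwise — has an injective global function, i.e., A is a reversible CA. -/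
open scoped Classical

noncomputable section

/-- Heavy-particle part of a state: `p_C(q) = 2·sR·(q / (2·sR))`. -/
def pC (sR q : ℕ) : ℕ := 2 * sR * (q / (2 * sR))

/-- Light-particle part of a state: `p_R(q) = q mod (2·sR)`. -/
def pR (sR q : ℕ) : ℕ := q % (2 * sR)

/-- All heavy particles `C̃ = {2k·sR : 0 ≤ k ≤ 2sC−1}`. -/
def Ctil (sC sR : ℕ) : Set ℕ := {c | ∃ k < 2 * sC, c = 2 * k * sR}

/-- All light particles `R̃ = {0,…,2sR−1}`. -/
def Rtil (sR : ℕ) : Set ℕ := {r | r < 2 * sR}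

/-- `Ĉ = {2k·sR : 0 ≤ k ≤ sC−1}`. -/
def Chat (sC sR : ℕ) : Set ℕ := {c | ∃ k < sC, c = 2 * k * sR}

/-- `Č = {2(k+sC)·sR : 0 ≤ k ≤ sC−1}`. -/
def Ccheck (sC sR : ℕ) : Set ℕ := {c | ∃ k < sC, c = 2 * (k + sC) * sR}

/-- `R̂ = {0,…,sR−1}`. -/
def Rhat (sR : ℕ) : Set ℕ := {r | r < sR}

/-- `Ř = {sR,…,2sR−1}`. -/
def Rcheck (sR : ℕ) : Set ℕ := {r | sR ≤ r ∧ r < 2 * sR}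

/-- Balanced pair of states w.r.t. heavy particles. -/
def BC (sC sR q1 q2 : ℕ) : Prop :=
  pC sR q1 ∈ Chat sC sR ∧ pC sR q2 ∈ Ccheck sC sR ∧
    pC sR q1 + pC sR q2 = 2 * (2 * sC - 1) * sR

/-- Balanced pair of states w.r.t. light particles. -/
def BR (sR q1 q2 : ℕ) : Prop :=
  pR sR q1 ∈ Rhat sR ∧ pR sR q2 ∈ Rcheck sR ∧
    pR sR q1 + pR sR q2 = 2 * sR - 1

/-- `φ̂_C : C → Ĉ` built from an arbitrary bijection `φC` of `C = Fin sC`. -/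
def phatC (sC sR : ℕ) (φC : Fin sC ≃ Fin sC) (c : Fin sC) : ℕ := 2 * (φC c : ℕ) * sR

/-- `φ̂_R : R → R̂` built from an arbitrary bijection `φR` of `R = Fin sR`. -/
def phatR (sR : ℕ) (φR : Fin sR ≃ Fin sR) (r : Fin sR) : ℕ := (φR r : ℕ)

/-- `φ̌_C(c) = 2(2sC−1)sR − φ̂_C(c)`. -/
def pcheckC (sC sR : ℕ) (φC : Fin sC ≃ Fin sC) (c : Fin sC) : ℕ :=
  2 * (2 * sC - 1) * sR - phatC sC sR φC c

/-- `φ̌_R(r) = 2sR−1 − φ̂_R(r)`. -/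
def pcheckR (sR : ℕ) (φR : Fin sR ≃ Fin sR) (r : Fin sR) : ℕ :=
  2 * sR - 1 - phatR sR φR r

/-- `φ̂(c,r) = φ̂_C(c) + φ̂_R(r)`. -/
def phat (sC sR : ℕ) (φC : Fin sC ≃ Fin sC) (φR : Fin sR ≃ Fin sR)
    (q : Fin sC × Fin sR) : ℕ := phatC sC sR φC q.1 + phatR sR φR q.2

/-- `φ̌(c,r) = φ̌_C(c) + φ̌_R(r)`. -/
def pcheck (sC sR : ℕ) (φC : Fin sC ≃ Fin sC) (φR : Fin sR ≃ Fin sR)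
    (q : Fin sC × Fin sR) : ℕ := pcheckC sC sR φC q.1 + pcheckR sR φR q.2

/-- `Q̂ = {ĉ + r̂ : ĉ ∈ Ĉ, r̂ ∈ R̂}`. -/
def Qhat (sC sR : ℕ) : Set ℕ := {q | ∃ c ∈ Chat sC sR, ∃ r ∈ Rhat sR, q = c + r}

/-- `Q̌ = {č + ř : č ∈ Č, ř ∈ Ř}`. -/
def Qcheck (sC sR : ℕ) : Set ℕ := {q | ∃ c ∈ Ccheck sC sR, ∃ r ∈ Rcheck sR, q = c + r}

/-- `φ̂_C⁻¹` applied to a heavy particle (given as a natural number). -/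
def decC (sC sR : ℕ) [NeZero sC] (φC : Fin sC ≃ Fin sC) (c : ℕ) : Fin sC :=
  φC.symm ⟨(c / (2 * sR)) % sC, Nat.mod_lt _ (Nat.pos_of_ne_zero (NeZero.ne sC))⟩

/-- `φ̂_R⁻¹` applied to a light particle (given as a natural number). -/
def decR (sR : ℕ) [NeZero sR] (φR : Fin sR ≃ Fin sR) (r : ℕ) : Fin sR :=
  φR.symm ⟨r % sR, Nat.mod_lt _ (Nat.pos_of_ne_zero (NeZero.ne sR))⟩

/-- The three-case local function `f̃` of the 4-neighbor RNCCA `A`. -/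
def ftil (sC sR : ℕ) [NeZero sC] [NeZero sR] (φC : Fin sC ≃ Fin sC) (φR : Fin sR ≃ Fin sR)
    (f : Fin sC × Fin sR → Fin sC × Fin sR) (qm2 qm1 q0 q1 : ℕ) : ℕ :=
  if BR sR qm1 q0 ∧ BC sC sR q0 q1 then
    phat sC sR φC φR (f (decC sC sR φC (pC sR q0), decR sR φR (pR sR qm1)))
  else if BR sR qm2 qm1 ∧ BC sC sR qm1 q0 then
    pcheck sC sR φC φR (f (decC sC sR φC (pC sR qm1), decR sR φR (pR sR qm2)))
  else pC sR q0 + pR sR qm1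

/-- Global function `F̃` of `A` with neighborhood `(−2,−1,0,1)`. -/
def Ftil (sC sR : ℕ) [NeZero sC] [NeZero sR] (φC : Fin sC ≃ Fin sC) (φR : Fin sR ≃ Fin sR)
    (f : Fin sC × Fin sR → Fin sC × Fin sR) (α : ℤ → ℕ) (x : ℤ) : ℕ :=
  ftil sC sR φC φR f (α (x - 2)) (α (x - 1)) (α x) (α (x + 1))

/-- The encoding `τ̃`: `τ̃(α)(2x) = φ̂(α(x))`, `τ̃(α)(2x+1) = φ̌(α(x))`. -/
def tenc (sC sR : ℕ) (φC : Fin sC ≃ Fin sC) (φR : Fin sR ≃ Fin sR)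
    (α : ℤ → Fin sC × Fin sR) (y : ℤ) : ℕ :=
  if Even y then phat sC sR φC φR (α (y / 2)) else pcheck sC sR φC φR (α ((y - 1) / 2))

/-- Global function of the 2-neighbor PCA `P` with neighborhood `(0,−1)`. -/
def FP {C R : Type*} (f : C × R → C × R) (α : ℤ → C × R) (x : ℤ) : C × R :=
  f ((α x).1, (α (x - 1)).2)

end

/-!
Write `β = F̃(α)`. A cell `x` of `α` is balanced when the first branch of `f̃` fires there; it
then outputs `φ̂(f(c, r))` and cell `x + 1` fires the second branch and outputs `φ̌(f(c, r))`
for the same argument. The heavy parts of `φ̂`-images lie in `Ĉ` and those of `φ̌`-images in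
`Č`, whereas a third-branch output `p_C(α x) + p_R(α (x - 1))` forms a complementary pair with
its right neighbour only if `x` is balanced. Hence `x` is balanced iff `(β x, β (x + 1))` is a
complementary pair, so `β` sees where `α` is balanced. Each part of `α x` is then read off `β`:
through the injectivity of `f` and `φ̂` if the neighbouring cell carrying it is balanced, as the
complement of the part it is paired with, or copied by the third branch.
-/

section

variable {sC sR : ℕ} {φC : Fin sC ≃ Fin sC} {φR : Fin sR ≃ Fin sR}
  {f : Fin sC × Fin sR → Fin sC × Fin sR}

section Parts

lemma pC_add_pR (sR q : ℕ) : pC sR q + pR sR q = q := Nat.div_add_mod q (2 * sR)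

lemma pR_lt [NeZero sR] (q : ℕ) : pR sR q < 2 * sR :=
  Nat.mod_lt _ (by have := NeZero.pos sR; omega)

lemma pC_mul_add (h : ℕ) {l : ℕ} (hl : l < 2 * sR) : pC sR (2 * sR * h + l) = 2 * sR * h := by
  rw [pC, Nat.mul_add_div (by omega), Nat.div_eq_of_lt hl, add_zero]

lemma pR_mul_add (h : ℕ) {l : ℕ} (hl : l < 2 * sR) : pR sR (2 * sR * h + l) = l := by
  rw [pR, Nat.mul_add_mod, Nat.mod_eq_of_lt hl]

lemma pC_pC_add_pR [NeZero sR] (b c : ℕ) : pC sR (pC sR c + pR sR b) = pC sR c :=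
  pC_mul_add _ (pR_lt b)

lemma pR_pC_add_pR [NeZero sR] (b c : ℕ) : pR sR (pC sR c + pR sR b) = pR sR b :=
  pR_mul_add _ (pR_lt b)

lemma Chat_disjoint_Ccheck [NeZero sR] : Disjoint (Chat sC sR) (Ccheck sC sR) := by
  refine Set.disjoint_left.2 ?_
  rintro _ ⟨k, hk, rfl⟩ ⟨l, -, h⟩
  have := Nat.eq_of_mul_eq_mul_right (NeZero.pos sR) h
  omega

lemma not_BC_of_BC [NeZero sR] {b c d : ℕ} (h : BC sC sR b c) : ¬ BC sC sR c d := fun h' =>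
  Set.disjoint_left.1 Chat_disjoint_Ccheck h'.1 h.2.1

end Parts

section Encoding

lemma phat_eq (v : Fin sC × Fin sR) :
    phat sC sR φC φR v = 2 * sR * (φC v.1 : ℕ) + (φR v.2 : ℕ) := by
  rw [phat, phatC, phatR, mul_right_comm]

lemma pcheck_eq (v : Fin sC × Fin sR) :
    pcheck sC sR φC φR v =
      2 * sR * (2 * sC - 1 - (φC v.1 : ℕ)) + (2 * sR - 1 - (φR v.2 : ℕ)) := by
  rw [pcheck, pcheckC, pcheckR, phatC, phatR, mul_right_comm 2 (2 * sC - 1),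
    mul_right_comm 2 (φC v.1 : ℕ), ← Nat.mul_sub]

lemma pC_phat [NeZero sR] (v : Fin sC × Fin sR) :
    pC sR (phat sC sR φC φR v) = 2 * sR * (φC v.1 : ℕ) := by
  rw [phat_eq]
  exact pC_mul_add _ (by have := (φR v.2).isLt; omega)

lemma pR_phat [NeZero sR] (v : Fin sC × Fin sR) : pR sR (phat sC sR φC φR v) = (φR v.2 : ℕ) := by
  rw [phat_eq]
  exact pR_mul_add _ (by have := (φR v.2).isLt; omega)

lemma pC_pcheck [NeZero sR] (v : Fin sC × Fin sR) :
    pC sR (pcheck sC sR φC φR v) = 2 * sR * (2 * sC - 1 - (φC v.1 : ℕ)) := by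
  rw [pcheck_eq]
  exact pC_mul_add _ (by have := NeZero.pos sR; omega)

lemma pR_pcheck [NeZero sR] (v : Fin sC × Fin sR) :
    pR sR (pcheck sC sR φC φR v) = 2 * sR - 1 - (φR v.2 : ℕ) := by
  rw [pcheck_eq]
  exact pR_mul_add _ (by have := NeZero.pos sR; omega)

lemma pC_phat_mem_Chat [NeZero sR] (v : Fin sC × Fin sR) :
    pC sR (phat sC sR φC φR v) ∈ Chat sC sR :=
  ⟨_, (φC v.1).isLt, by rw [pC_phat]; ring⟩

lemma pC_pcheck_mem_Ccheck [NeZero sR] (v : Fin sC × Fin sR) :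
    pC sR (pcheck sC sR φC φR v) ∈ Ccheck sC sR := by
  have := (φC v.1).isLt
  refine ⟨sC - 1 - (φC v.1 : ℕ), by omega, ?_⟩
  rw [pC_pcheck, show sC - 1 - (φC v.1 : ℕ) + sC = 2 * sC - 1 - (φC v.1 : ℕ) by omega]
  ring

lemma phat_injective [NeZero sR] : Function.Injective (phat sC sR φC φR) := by
  intro v w h
  have hC := congrArg (pC sR) h
  have hR := congrArg (pR sR) h
  rw [pC_phat, pC_phat] at hC
  rw [pR_phat, pR_phat] at hR
  have hC' := Nat.eq_of_mul_eq_mul_left (by have := NeZero.pos sR; omega) hC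
  exact Prod.ext (φC.injective (Fin.ext hC')) (φR.injective (Fin.ext hR))

def IsComplementary (sC sR a b : ℕ) : Prop := BC sC sR a b ∧ BR sR a b

lemma isComplementary_phat_pcheck [NeZero sR] (v : Fin sC × Fin sR) :
    IsComplementary sC sR (phat sC sR φC φR v) (pcheck sC sR φC φR v) := by
  have hc := (φC v.1).isLt
  have hr := (φR v.2).isLt
  refine ⟨⟨pC_phat_mem_Chat v, pC_pcheck_mem_Ccheck v, ?_⟩, ?_, ?_, ?_⟩
  · rw [pC_phat, pC_pcheck, ← mul_add, Nat.add_sub_cancel' (by omega)]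
    ring
  · rw [pR_phat]; exact hr
  · rw [pR_pcheck]; constructor <;> omega
  · rw [pR_phat, pR_pcheck]; omega

lemma decC_injOn_Chat [NeZero sC] [NeZero sR] : Set.InjOn (decC sC sR φC) (Chat sC sR) := by
  rintro _ ⟨k, hk, rfl⟩ _ ⟨l, hl, rfl⟩ h
  have index : ∀ m < sC, 2 * m * sR / (2 * sR) % sC = m := fun m hm => by
    rw [mul_right_comm, Nat.mul_div_cancel_left _ (by have := NeZero.pos sR; omega),
      Nat.mod_eq_of_lt hm]
  have hkl := congrArg Fin.val (φC.symm.injective h)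
  simp only [index k hk, index l hl] at hkl
  rw [hkl]

lemma decR_injOn_Rhat [NeZero sR] : Set.InjOn (decR sR φR) (Rhat sR) := fun r hr s hs h => by
  have hrs := congrArg Fin.val (φR.symm.injective h)
  simpa only [Nat.mod_eq_of_lt hr, Nat.mod_eq_of_lt hs] using hrs

end Encoding

section LocalRule

variable [NeZero sC] [NeZero sR] (φC φR f)

lemma ftil_of_balanced {a b c d : ℕ} (h : BR sR b c ∧ BC sC sR c d) :
    ftil sC sR φC φR f a b c d =
      phat sC sR φC φR (f (decC sC sR φC (pC sR c), decR sR φR (pR sR b))) := by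
  rw [ftil, if_pos h]

lemma ftil_of_balanced_left {a b c d : ℕ} (h : BR sR a b ∧ BC sC sR b c) :
    ftil sC sR φC φR f a b c d =
      pcheck sC sR φC φR (f (decC sC sR φC (pC sR b), decR sR φR (pR sR a))) := by
  rw [ftil, if_neg fun h' => not_BC_of_BC h.2 h'.2, if_pos h]

lemma ftil_of_not_balanced {a b c d : ℕ} (h : ¬ (BR sR b c ∧ BC sC sR c d))
    (h' : ¬ (BR sR a b ∧ BC sC sR b c)) :
    ftil sC sR φC φR f a b c d = pC sR c + pR sR b := by
  rw [ftil, if_neg h, if_neg h']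

lemma isComplementary_ftil_iff (a b c d e : ℕ) :
    IsComplementary sC sR (ftil sC sR φC φR f a b c d) (ftil sC sR φC φR f b c d e) ↔
      BR sR b c ∧ BC sC sR c d := by
  refine ⟨fun hComp => ?_, fun h => ?_⟩
  · by_contra h
    by_cases hab : BR sR a b ∧ BC sC sR b c
    · rw [ftil_of_balanced_left φC φR f hab] at hComp
      exact Set.disjoint_left.1 Chat_disjoint_Ccheck hComp.1.1 (pC_pcheck_mem_Ccheck _)
    rw [ftil_of_not_balanced φC φR f h hab] at hComp
    by_cases hde : BR sR c d ∧ BC sC sR d e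
    · rw [ftil_of_balanced φC φR f hde] at hComp
      exact Set.disjoint_left.1 Chat_disjoint_Ccheck (pC_phat_mem_Chat _) hComp.1.2.1
    rw [ftil_of_not_balanced φC φR f hde h] at hComp
    obtain ⟨⟨hC₁, hC₂, hC₃⟩, hR₁, hR₂, hR₃⟩ := hComp
    simp only [pC_pC_add_pR, pR_pC_add_pR] at hC₁ hC₂ hC₃ hR₁ hR₂ hR₃
    exact h ⟨⟨hR₁, hR₂, hR₃⟩, hC₁, hC₂, hC₃⟩
  · rw [ftil_of_balanced φC φR f h, ftil_of_balanced_left φC φR f h]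
    exact isComplementary_phat_pcheck _

end LocalRule

section GlobalRule

def IsBalancedAt (sC sR : ℕ) (α : ℤ → ℕ) (x : ℤ) : Prop :=
  BR sR (α (x - 1)) (α x) ∧ BC sC sR (α x) (α (x + 1))

variable [NeZero sC] [NeZero sR] (φC φR f)

lemma Ftil_of_isBalancedAt {α : ℤ → ℕ} {x : ℤ} (h : IsBalancedAt sC sR α x) :
    Ftil sC sR φC φR f α x =
      phat sC sR φC φR (f (decC sC sR φC (pC sR (α x)), decR sR φR (pR sR (α (x - 1))))) :=
  ftil_of_balanced φC φR f h

lemma Ftil_of_not_isBalancedAt {α : ℤ → ℕ} {x : ℤ} (h : ¬ IsBalancedAt sC sR α x)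
    (h' : ¬ IsBalancedAt sC sR α (x - 1)) :
    Ftil sC sR φC φR f α x = pC sR (α x) + pR sR (α (x - 1)) := by
  rw [IsBalancedAt, sub_sub, one_add_one_eq_two, sub_add_cancel] at h'
  exact ftil_of_not_balanced φC φR f h h'

lemma isBalancedAt_iff_isComplementary (α : ℤ → ℕ) (x : ℤ) :
    IsBalancedAt sC sR α x ↔
      IsComplementary sC sR (Ftil sC sR φC φR f α x) (Ftil sC sR φC φR f α (x + 1)) := by
  rw [Ftil, Ftil, show x + 1 - 2 = x - 1 by ring, add_sub_cancel_right,
    isComplementary_ftil_iff]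
  rfl

variable {φC φR f}

lemma isBalancedAt_congr {α₁ α₂ : ℤ → ℕ}
    (h : Ftil sC sR φC φR f α₁ = Ftil sC sR φC φR f α₂) (x : ℤ) :
    IsBalancedAt sC sR α₁ x ↔ IsBalancedAt sC sR α₂ x := by
  rw [isBalancedAt_iff_isComplementary φC φR f, isBalancedAt_iff_isComplementary φC φR f, h]

lemma parts_eq_of_isBalancedAt (hf : Function.Injective f) {α₁ α₂ : ℤ → ℕ} {x : ℤ}
    (h : Ftil sC sR φC φR f α₁ x = Ftil sC sR φC φR f α₂ x)
    (h₁ : IsBalancedAt sC sR α₁ x) (h₂ : IsBalancedAt sC sR α₂ x) :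
    pC sR (α₁ x) = pC sR (α₂ x) ∧ pR sR (α₁ (x - 1)) = pR sR (α₂ (x - 1)) := by
  rw [Ftil_of_isBalancedAt φC φR f h₁, Ftil_of_isBalancedAt φC φR f h₂] at h
  obtain ⟨hC, hR⟩ := Prod.ext_iff.1 (hf (phat_injective h))
  exact ⟨decC_injOn_Chat h₁.2.1 h₂.2.1 hC, decR_injOn_Rhat h₁.1.1 h₂.1.1 hR⟩

lemma pC_eq_of_Ftil_eq (hf : Function.Injective f) {α₁ α₂ : ℤ → ℕ}
    (h : Ftil sC sR φC φR f α₁ = Ftil sC sR φC φR f α₂) (x : ℤ) :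
    pC sR (α₁ x) = pC sR (α₂ x) := by
  by_cases hx : IsBalancedAt sC sR α₁ x
  · exact (parts_eq_of_isBalancedAt hf (congrFun h x) hx ((isBalancedAt_congr h x).1 hx)).1
  by_cases hx' : IsBalancedAt sC sR α₁ (x - 1)
  · have hx'₂ := (isBalancedAt_congr h (x - 1)).1 hx'
    have hprev := (parts_eq_of_isBalancedAt hf (congrFun h (x - 1)) hx' hx'₂).1
    have hsum₁ := hx'.2.2.2
    have hsum₂ := hx'₂.2.2.2
    rw [sub_add_cancel] at hsum₁ hsum₂
    omega
  have hx₂ := mt (isBalancedAt_congr h x).2 hx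
  have hx'₂ := mt (isBalancedAt_congr h (x - 1)).2 hx'
  have hβ := congrArg (pC sR) (congrFun h x)
  rwa [Ftil_of_not_isBalancedAt φC φR f hx hx', Ftil_of_not_isBalancedAt φC φR f hx₂ hx'₂,
    pC_pC_add_pR, pC_pC_add_pR] at hβ

lemma pR_eq_of_Ftil_eq (hf : Function.Injective f) {α₁ α₂ : ℤ → ℕ}
    (h : Ftil sC sR φC φR f α₁ = Ftil sC sR φC φR f α₂) (x : ℤ) :
    pR sR (α₁ x) = pR sR (α₂ x) := by
  by_cases hx : IsBalancedAt sC sR α₁ (x + 1)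
  · have := (parts_eq_of_isBalancedAt hf (congrFun h (x + 1)) hx
      ((isBalancedAt_congr h (x + 1)).1 hx)).2
    rwa [add_sub_cancel_right] at this
  by_cases hx' : IsBalancedAt sC sR α₁ x
  · have hx'₂ := (isBalancedAt_congr h x).1 hx'
    have hprev := (parts_eq_of_isBalancedAt hf (congrFun h x) hx' hx'₂).2
    have hsum₁ := hx'.1.2.2
    have hsum₂ := hx'₂.1.2.2
    omega
  have hx₂ := mt (isBalancedAt_congr h (x + 1)).2 hx
  have hx'₂ := mt (isBalancedAt_congr h x).2 hx'
  have hβ := congrArg (pR sR) (congrFun h (x + 1))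
  rw [← add_sub_cancel_right x 1] at hx' hx'₂
  rwa [Ftil_of_not_isBalancedAt φC φR f hx hx', Ftil_of_not_isBalancedAt φC φR f hx₂ hx'₂,
    pR_pC_add_pR, pR_pC_add_pR, add_sub_cancel_right] at hβ

end GlobalRule

end

theorem stmt5 (sC sR : ℕ) [NeZero sC] [NeZero sR] (φC : Fin sC ≃ Fin sC)
    (φR : Fin sR ≃ Fin sR) (f : Fin sC × Fin sR → Fin sC × Fin sR)
    (hf : Function.Injective f) :
    ∀ α1 α2 : ℤ → ℕ, (∀ x : ℤ, α1 x < 4 * sC * sR) → (∀ x : ℤ, α2 x < 4 * sC * sR) →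
      Ftil sC sR φC φR f α1 = Ftil sC sR φC φR f α2 → α1 = α2 := by
  intro α1 α2 _ _ h
  funext x
  rw [← pC_add_pR sR (α1 x), ← pC_add_pR sR (α2 x), pC_eq_of_Ftil_eq hf h x,
    pR_eq_of_Ftil_eq hf h x]
end

section
/- The constructed 4-neighbor CA A simulates the 2-neighbor RPCA P in two steps: for every configuration α : ℤ → C×R and every x ∈ ℤ, F̃²(τ̃(α))(2x) = τ̃(F(α))(2x) and F̃²(τ̃(α))(2x+1) = τ̃(F(α))(2x+1), where F is the global function of P and F̃ that of A; i.e., F̃² ∘ τ̃ = τ̃ ∘ F. -/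
open scoped Classical

/-!
A state of `A` is a heavy part, a multiple of `2·sR`, plus a light part below `2·sR`, which `pC`
and `pR` recover. The firing condition `BR q₋₁ q₀ ∧ BC q₀ q₁` of `f̃` needs a light hat at `q₋₁`
and a heavy hat at `q₀`; in `τ̃(α)` both parts of every odd cell are checks, so nothing fires and
the first step of `A` only moves light parts one cell to the right: cell `2x` then holds
`φ̂_C(c_x) + φ̌_R(r_{x-1})` and cell `2x+1` holds `φ̌_C(c_x) + φ̂_R(r_x)`. Now cells `2x-1, 2x` are
light-balanced on `r_{x-1}` and cells `2x, 2x+1` heavy-balanced on `c_x`, so in the second step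
both `2x` and `2x+1` decode `(c_x, r_{x-1})`, apply `f`, and re-encode the result by `φ̂` and `φ̌`.
-/

section Encoding

variable {sC sR : ℕ}

lemma pC_two_mul_mul_add {k r : ℕ} (hr : r < 2 * sR) :
    pC sR (2 * k * sR + r) = 2 * k * sR := by
  rw [pC, show 2 * k * sR + r = 2 * sR * k + r by ring, Nat.mul_add_div (by omega),
    Nat.div_eq_of_lt hr, add_zero, mul_comm]
  ring

lemma pR_two_mul_mul_add {k r : ℕ} (hr : r < 2 * sR) : pR sR (2 * k * sR + r) = r := by
  rw [pR, show 2 * k * sR + r = 2 * sR * k + r by ring, Nat.mul_add_mod, Nat.mod_eq_of_lt hr]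

variable (φC : Fin sC ≃ Fin sC) (φR : Fin sR ≃ Fin sR)

lemma phatR_lt (r : Fin sR) : phatR sR φR r < sR := (φR r).isLt

lemma phatR_lt_two_mul (r : Fin sR) : phatR sR φR r < 2 * sR := by
  have := phatR_lt φR r
  omega

lemma le_pcheckR (r : Fin sR) : sR ≤ pcheckR sR φR r := by
  have := phatR_lt φR r
  unfold pcheckR
  omega

lemma pcheckR_lt_two_mul (r : Fin sR) : pcheckR sR φR r < 2 * sR := by
  have := phatR_lt φR r
  unfold pcheckR
  omega

lemma phatR_add_pcheckR (r : Fin sR) : phatR sR φR r + pcheckR sR φR r = 2 * sR - 1 := by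
  have := phatR_lt φR r
  unfold pcheckR
  omega

lemma pcheckC_eq (c : Fin sC) : pcheckC sC sR φC c = 2 * (2 * sC - 1 - φC c) * sR := by
  have := (φC c).isLt
  rw [pcheckC, phatC, ← Nat.sub_mul]
  congr 1
  omega

lemma phatC_add_pcheckC (c : Fin sC) :
    phatC sC sR φC c + pcheckC sC sR φC c = 2 * (2 * sC - 1) * sR := by
  have := (φC c).isLt
  rw [pcheckC_eq, phatC, ← add_mul, ← mul_add]
  congr 2
  omega

lemma phatC_mem_Chat (c : Fin sC) : phatC sC sR φC c ∈ Chat sC sR := ⟨φC c, (φC c).isLt, rfl⟩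

lemma pcheckC_mem_Ccheck (c : Fin sC) : pcheckC sC sR φC c ∈ Ccheck sC sR := by
  have := (φC c).isLt
  refine ⟨sC - 1 - φC c, by omega, ?_⟩
  rw [pcheckC_eq]
  congr 2
  omega

lemma pcheckC_notMem_Chat [NeZero sR] (c : Fin sC) : pcheckC sC sR φC c ∉ Chat sC sR := by
  rintro ⟨k, hk, h⟩
  have := (φC c).isLt
  rw [pcheckC_eq] at h
  have := Nat.eq_of_mul_eq_mul_right (Nat.pos_of_neZero sR) h
  omega

lemma pcheckR_notMem_Rhat (r : Fin sR) : pcheckR sR φR r ∉ Rhat sR :=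
  (le_pcheckR φR r).not_gt

lemma pC_phatC_add {r : ℕ} (c : Fin sC) (hr : r < 2 * sR) :
    pC sR (phatC sC sR φC c + r) = phatC sC sR φC c :=
  pC_two_mul_mul_add hr

lemma pR_phatC_add {r : ℕ} (c : Fin sC) (hr : r < 2 * sR) :
    pR sR (phatC sC sR φC c + r) = r :=
  pR_two_mul_mul_add hr

lemma pC_pcheckC_add {r : ℕ} (c : Fin sC) (hr : r < 2 * sR) :
    pC sR (pcheckC sC sR φC c + r) = pcheckC sC sR φC c := by
  rw [pcheckC_eq, pC_two_mul_mul_add hr]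

lemma pR_pcheckC_add {r : ℕ} (c : Fin sC) (hr : r < 2 * sR) :
    pR sR (pcheckC sC sR φC c + r) = r := by
  rw [pcheckC_eq, pR_two_mul_mul_add hr]

lemma decC_phatC [NeZero sC] [NeZero sR] (c : Fin sC) :
    decC sC sR φC (phatC sC sR φC c) = c := by
  have hdiv : 2 * (φC c : ℕ) * sR / (2 * sR) = φC c := by
    rw [show 2 * (φC c : ℕ) * sR = 2 * sR * φC c by ring,
      Nat.mul_div_cancel_left _ (by have := Nat.pos_of_neZero sR; omega)]
  simp [decC, phatC, hdiv, Nat.mod_eq_of_lt (φC c).isLt]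

lemma decR_phatR [NeZero sR] (r : Fin sR) : decR sR φR (phatR sR φR r) = r := by
  simp [decR, phatR, Nat.mod_eq_of_lt (φR r).isLt]

variable {φC φR}

lemma BR_of_pR_eq {a b : ℕ} {r : Fin sR} (ha : pR sR a = phatR sR φR r)
    (hb : pR sR b = pcheckR sR φR r) : BR sR a b := by
  rw [BR, ha, hb]
  exact ⟨phatR_lt φR r, ⟨le_pcheckR φR r, pcheckR_lt_two_mul φR r⟩, phatR_add_pcheckR φR r⟩

lemma BC_of_pC_eq {a b : ℕ} {c : Fin sC} (ha : pC sR a = phatC sC sR φC c)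
    (hb : pC sR b = pcheckC sC sR φC c) : BC sC sR a b := by
  rw [BC, ha, hb]
  exact ⟨phatC_mem_Chat φC c, pcheckC_mem_Ccheck φC c, phatC_add_pcheckC φC c⟩

lemma not_BR_of_pR_eq {a b : ℕ} {r : Fin sR} (ha : pR sR a = pcheckR sR φR r) : ¬ BR sR a b :=
  fun h ↦ pcheckR_notMem_Rhat φR r (ha ▸ h.1)

lemma not_BC_of_pC_eq [NeZero sR] {a b : ℕ} {c : Fin sC} (ha : pC sR a = pcheckC sC sR φC c) :
    ¬ BC sC sR a b :=
  fun h ↦ pcheckC_notMem_Chat φC c (ha ▸ h.1)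

lemma tenc_two_mul (α : ℤ → Fin sC × Fin sR) (z : ℤ) :
    tenc sC sR φC φR α (2 * z) = phat sC sR φC φR (α z) := by
  rw [tenc, if_pos (even_two_mul z), Int.mul_ediv_cancel_left _ two_ne_zero]

lemma tenc_two_mul_add_one (α : ℤ → Fin sC × Fin sR) (z : ℤ) :
    tenc sC sR φC φR α (2 * z + 1) = pcheck sC sR φC φR (α z) := by
  rw [tenc, if_neg (Int.not_even_two_mul_add_one z), add_sub_cancel_right,
    Int.mul_ediv_cancel_left _ two_ne_zero]

end Encoding

section Simulation

variable {sC sR : ℕ} [NeZero sC] [NeZero sR] {φC : Fin sC ≃ Fin sC} {φR : Fin sR ≃ Fin sR}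
  {f : Fin sC × Fin sR → Fin sC × Fin sR}

lemma Ftil_two_mul (β : ℤ → ℕ) (z : ℤ) :
    Ftil sC sR φC φR f β (2 * z) =
      ftil sC sR φC φR f (β (2 * (z - 1))) (β (2 * (z - 1) + 1)) (β (2 * z)) (β (2 * z + 1)) := by
  rw [Ftil, show 2 * z - 2 = 2 * (z - 1) by ring, show 2 * z - 1 = 2 * (z - 1) + 1 by ring]

lemma Ftil_two_mul_add_one (β : ℤ → ℕ) (z : ℤ) :
    Ftil sC sR φC φR f β (2 * z + 1) =
      ftil sC sR φC φR f (β (2 * (z - 1) + 1)) (β (2 * z)) (β (2 * z + 1)) (β (2 * (z + 1))) := by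
  rw [Ftil, show 2 * z + 1 - 2 = 2 * (z - 1) + 1 by ring, add_sub_cancel_right,
    show 2 * z + 1 + 1 = 2 * (z + 1) by ring]

lemma Ftil_tenc_two_mul (α : ℤ → Fin sC × Fin sR) (z : ℤ) :
    Ftil sC sR φC φR f (tenc sC sR φC φR α) (2 * z) =
      phatC sC sR φC (α z).1 + pcheckR sR φR (α (z - 1)).2 := by
  have hqm1_C := pC_pcheckC_add φC (α (z - 1)).1 (pcheckR_lt_two_mul φR (α (z - 1)).2)
  have hqm1_R := pR_pcheckC_add φC (α (z - 1)).1 (pcheckR_lt_two_mul φR (α (z - 1)).2)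
  rw [Ftil_two_mul, tenc_two_mul, tenc_two_mul_add_one, tenc_two_mul, tenc_two_mul_add_one,
    ftil, if_neg (fun h ↦ not_BR_of_pR_eq hqm1_R h.1),
    if_neg (fun h ↦ not_BC_of_pC_eq hqm1_C h.2), phat, pC_phatC_add _ _ (phatR_lt_two_mul _ _),
    pcheck, hqm1_R]

lemma Ftil_tenc_two_mul_add_one (α : ℤ → Fin sC × Fin sR) (z : ℤ) :
    Ftil sC sR φC φR f (tenc sC sR φC φR α) (2 * z + 1) =
      pcheckC sC sR φC (α z).1 + phatR sR φR (α z).2 := by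
  have hq0_C := pC_pcheckC_add φC (α z).1 (pcheckR_lt_two_mul φR (α z).2)
  have hqm2_R := pR_pcheckC_add φC (α (z - 1)).1 (pcheckR_lt_two_mul φR (α (z - 1)).2)
  rw [Ftil_two_mul_add_one, tenc_two_mul, tenc_two_mul_add_one, tenc_two_mul,
    tenc_two_mul_add_one, ftil, if_neg (fun h ↦ not_BC_of_pC_eq hq0_C h.2),
    if_neg (fun h ↦ not_BR_of_pR_eq hqm2_R h.1), pcheck, hq0_C, phat,
    pR_phatC_add _ _ (phatR_lt_two_mul _ _)]

lemma ftil_balanced_left (qm2 : ℕ) (c' c : Fin sC) (r r' : Fin sR) :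
    ftil sC sR φC φR f qm2 (pcheckC sC sR φC c' + phatR sR φR r)
      (phatC sC sR φC c + pcheckR sR φR r) (pcheckC sC sR φC c + phatR sR φR r') =
      phat sC sR φC φR (f (c, r)) := by
  have hqm1 := pR_pcheckC_add φC c' (phatR_lt_two_mul φR r)
  have hq0_C := pC_phatC_add φC c (pcheckR_lt_two_mul φR r)
  have hq0_R := pR_phatC_add φC c (pcheckR_lt_two_mul φR r)
  have hq1 := pC_pcheckC_add φC c (phatR_lt_two_mul φR r')
  rw [ftil, if_pos ⟨BR_of_pR_eq hqm1 hq0_R, BC_of_pC_eq hq0_C hq1⟩, hq0_C, hqm1, decC_phatC,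
    decR_phatR]

lemma ftil_balanced_right (q1 : ℕ) (c' c : Fin sC) (r r' : Fin sR) :
    ftil sC sR φC φR f (pcheckC sC sR φC c' + phatR sR φR r)
      (phatC sC sR φC c + pcheckR sR φR r) (pcheckC sC sR φC c + phatR sR φR r') q1 =
      pcheck sC sR φC φR (f (c, r)) := by
  have hqm2 := pR_pcheckC_add φC c' (phatR_lt_two_mul φR r)
  have hqm1_C := pC_phatC_add φC c (pcheckR_lt_two_mul φR r)
  have hqm1_R := pR_phatC_add φC c (pcheckR_lt_two_mul φR r)
  have hq0 := pC_pcheckC_add φC c (phatR_lt_two_mul φR r')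
  rw [ftil, if_neg (fun h ↦ not_BR_of_pR_eq hqm1_R h.1),
    if_pos ⟨BR_of_pR_eq hqm2 hqm1_R, BC_of_pC_eq hqm1_C hq0⟩, hqm1_C, hqm2, decC_phatC,
    decR_phatR]

end Simulation

theorem stmt11_general (sC sR : ℕ) [NeZero sC] [NeZero sR] (φC : Fin sC ≃ Fin sC)
    (φR : Fin sR ≃ Fin sR) (f : Fin sC × Fin sR → Fin sC × Fin sR)
    (α : ℤ → Fin sC × Fin sR) (x : ℤ) :
    Ftil sC sR φC φR f (Ftil sC sR φC φR f (tenc sC sR φC φR α)) (2 * x) =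
      tenc sC sR φC φR (FP f α) (2 * x) ∧
    Ftil sC sR φC φR f (Ftil sC sR φC φR f (tenc sC sR φC φR α)) (2 * x + 1) =
      tenc sC sR φC φR (FP f α) (2 * x + 1) := by
  constructor
  · rw [Ftil_two_mul]
    simp only [Ftil_tenc_two_mul, Ftil_tenc_two_mul_add_one]
    rw [ftil_balanced_left, tenc_two_mul, FP]
  · rw [Ftil_two_mul_add_one]
    simp only [Ftil_tenc_two_mul, Ftil_tenc_two_mul_add_one]
    rw [ftil_balanced_right, tenc_two_mul_add_one, FP]

theorem stmt11 (sC sR : ℕ) [NeZero sC] [NeZero sR] (φC : Fin sC ≃ Fin sC)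
    (φR : Fin sR ≃ Fin sR) (f : Fin sC × Fin sR → Fin sC × Fin sR)
    (hf : Function.Injective f) (α : ℤ → Fin sC × Fin sR) (x : ℤ) :
    Ftil sC sR φC φR f (Ftil sC sR φC φR f (tenc sC sR φC φR α)) (2 * x) =
      tenc sC sR φC φR (FP f α) (2 * x) ∧
    Ftil sC sR φC φR f (Ftil sC sR φC φR f (tenc sC sR φC φR α)) (2 * x + 1) =
      tenc sC sR φC φR (FP f α) (2 * x + 1) :=
  stmt11_general sC sR φC φR f α x
end
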